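/- arXiv:1508.02163 — 4 statements merged into one kernel-verified Lean document; each statement's English description precedes it below -/
import Mathlib

section
/- Let Q be an n×n real symmetric matrix, R an m×m real symmetric matrix, and S an m×n real matrix. Then the block matrix [[Q, Sᵀ],[S, R]] is positive semidefinite if and only if R is positive semidefinite, Q − Sᵀ R⁺ S is positive semidefinite, and the range of S is contained in the range of R (where R⁺ denotes the Moore–Penrose pseudoinverse of R). -/
/-! If `R * Rp * S = S`, the block matrix is congruent, through the invertible matrix
`[[1, 0], [Rp * S, 1]]`, to the block diagonal matrix `diag (Q - Sᵀ * Rp * S, R)`, and congruence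
by an invertible matrix preserves positive semidefiniteness. The identity `R * Rp * S = S` is
equivalent to the range condition. Conversely, if the block matrix is positive semidefinite and
`R y = 0`, its quadratic form vanishes at `(0, y)`, so `(0, y)` lies in its kernel and `Sᵀ y = 0`;
thus `ker R ≤ ker Sᵀ`, and since `R * Rp` is the orthogonal projection onto the range of `R`
this gives `R * Rp * S = S`. -/

open Matrix LinearMap

namespace Matrix

variable {m n : Type*} [Fintype m]

section CommRing

variable {α : Type*} [CommRing α]

theorem mul_mul_eq_self_iff_range_le [Fintype n] {R Rp : Matrix m m α} {S : Matrix m n α}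
    (h1 : R * Rp * R = R) :
    R * Rp * S = S ↔ range S.mulVecLin ≤ range R.mulVecLin := by
  constructor
  · rintro hS _ ⟨v, rfl⟩
    exact ⟨(Rp * S) *ᵥ v, by simp [mulVec_mulVec, ← Matrix.mul_assoc, hS]⟩
  · intro hS
    refine ext_iff_mulVec.2 fun v => ?_
    obtain ⟨w, hw⟩ := hS ⟨v, rfl⟩
    simp only [mulVecLin_apply] at hw
    rw [← mulVec_mulVec, ← hw, mulVec_mulVec, h1]

variable [StarRing α]

theorem mul_mul_eq_self_of_ker_le {R Rp : Matrix m m α} {S : Matrix m n α}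
    (hR : R.IsHermitian) (h1 : R * Rp * R = R) (h3 : (R * Rp)ᴴ = R * Rp)
    (hker : ∀ y, R *ᵥ y = 0 → Sᴴ *ᵥ y = 0) :
    R * Rp * S = S := by
  have hR_mul : R * (R * Rp) = R := by
    calc R * (R * Rp) = (R * Rp * R)ᴴ := by rw [conjTranspose_mul, h3, hR.eq]
      _ = R := by rw [h1, hR.eq]
  have hS_mul : Sᴴ * (R * Rp) = Sᴴ := ext_iff_mulVec.2 fun v => by
    have := hker (v - (R * Rp) *ᵥ v) (by rw [mulVec_sub, mulVec_mulVec, hR_mul, sub_self])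
    rw [mulVec_sub, sub_eq_zero] at this
    rw [← mulVec_mulVec, ← this]
  rw [← conjTranspose_conjTranspose S, ← h3, ← conjTranspose_mul, hS_mul]

theorem fromBlocks_eq_conjTranspose_mul_fromBlocks_zero_mul [Fintype n] [DecidableEq m]
    [DecidableEq n]
    {Q : Matrix n n α} {R Rp : Matrix m m α} {S : Matrix m n α}
    (hR : R.IsHermitian) (hS : R * Rp * S = S) :
    fromBlocks Q Sᴴ S R =
      (fromBlocks 1 0 (Rp * S) 1)ᴴ * fromBlocks (Q - Sᴴ * Rp * S) 0 0 R *
        fromBlocks 1 0 (Rp * S) 1 := by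
  have hSR : (Rp * S)ᴴ * R = Sᴴ := by
    rw [← hR.eq, ← conjTranspose_mul, ← Matrix.mul_assoc, hS]
  simp only [fromBlocks_conjTranspose, fromBlocks_multiply, conjTranspose_one, conjTranspose_zero,
    Matrix.one_mul, Matrix.mul_one, Matrix.zero_mul, Matrix.mul_zero, add_zero, zero_add, hSR]
  rw [← Matrix.mul_assoc, ← Matrix.mul_assoc, hS, sub_add_cancel]

end CommRing

section RCLike

open scoped ComplexOrder

variable {𝕜 : Type*} [RCLike 𝕜] [Fintype n]

theorem posSemidef_fromBlocks_zero_iff {A : Matrix n n 𝕜} {D : Matrix m m 𝕜} :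
    (fromBlocks A 0 0 D).PosSemidef ↔ A.PosSemidef ∧ D.PosSemidef := by
  refine ⟨fun h => ⟨h.submatrix Sum.inl, h.submatrix Sum.inr⟩, fun ⟨hA, hD⟩ => ?_⟩
  refine .of_dotProduct_mulVec_nonneg ?_ fun x => ?_
  · exact IsHermitian.fromBlocks hA.1 (by simp) hD.1
  · rw [← Sum.elim_comp_inl_inr x, fromBlocks_mulVec]
    simp only [zero_mulVec, add_zero, zero_add, Function.star_sumElim, sumElim_dotProduct_sumElim]
    exact add_nonneg (hA.dotProduct_mulVec_nonneg _) (hD.dotProduct_mulVec_nonneg _)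

theorem PosSemidef.conjTranspose_mulVec_eq_zero_of_fromBlocks {A : Matrix n n 𝕜}
    {B : Matrix m n 𝕜} {D : Matrix m m 𝕜} (hM : (fromBlocks A Bᴴ B D).PosSemidef)
    {y : m → 𝕜} (hy : D *ᵥ y = 0) : Bᴴ *ᵥ y = 0 := by
  have hq : star (Sum.elim 0 y) ⬝ᵥ fromBlocks A Bᴴ B D *ᵥ Sum.elim 0 y = 0 := by
    simp [fromBlocks_mulVec, Function.star_sumElim, hy]
  have hker := (hM.dotProduct_mulVec_zero_iff _).1 hq
  simpa [fromBlocks_mulVec, hy] using congrArg (· ∘ Sum.inl) hker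

variable [DecidableEq m] [DecidableEq n]

theorem posSemidef_fromBlocks_iff_of_mul_mul_eq_self {Q : Matrix n n 𝕜} {R Rp : Matrix m m 𝕜}
    {S : Matrix m n 𝕜} (hR : R.IsHermitian) (hS : R * Rp * S = S) :
    (fromBlocks Q Sᴴ S R).PosSemidef ↔ (Q - Sᴴ * Rp * S).PosSemidef ∧ R.PosSemidef := by
  have hU : IsUnit (fromBlocks 1 0 (Rp * S) 1 : Matrix (n ⊕ m) (n ⊕ m) 𝕜) := by simp
  rw [fromBlocks_eq_conjTranspose_mul_fromBlocks_zero_mul hR hS, ← star_eq_conjTranspose,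
    hU.posSemidef_star_left_conjugate_iff, posSemidef_fromBlocks_zero_iff]

theorem posSemidef_fromBlocks_iff {Q : Matrix n n 𝕜} {R Rp : Matrix m m 𝕜} {S : Matrix m n 𝕜}
    (hR : R.IsHermitian) (h1 : R * Rp * R = R) (h3 : (R * Rp)ᴴ = R * Rp) :
    (fromBlocks Q Sᴴ S R).PosSemidef ↔
      R.PosSemidef ∧ (Q - Sᴴ * Rp * S).PosSemidef ∧
        range S.mulVecLin ≤ range R.mulVecLin := by
  rw [← mul_mul_eq_self_iff_range_le h1]
  constructor
  · intro hM
    have hS := mul_mul_eq_self_of_ker_le hR h1 h3 fun _ ↦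
      hM.conjTranspose_mulVec_eq_zero_of_fromBlocks
    obtain ⟨hSchur, hRpsd⟩ := (posSemidef_fromBlocks_iff_of_mul_mul_eq_self hR hS).1 hM
    exact ⟨hRpsd, hSchur, hS⟩
  · rintro ⟨hRpsd, hSchur, hS⟩
    exact (posSemidef_fromBlocks_iff_of_mul_mul_eq_self hR hS).2 ⟨hSchur, hRpsd⟩

end RCLike

end Matrix

theorem stmt_0_general {n m : ℕ} (Q : Matrix (Fin n) (Fin n) ℝ) (R : Matrix (Fin m) (Fin m) ℝ)
    (S : Matrix (Fin m) (Fin n) ℝ) (hR : R.IsSymm)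
    (Rp : Matrix (Fin m) (Fin m) ℝ)
    (h1 : R * Rp * R = R)
    (h3 : (R * Rp)ᵀ = R * Rp) :
    (Matrix.fromBlocks Q Sᵀ S R).PosSemidef ↔
      R.PosSemidef ∧ (Q - Sᵀ * Rp * S).PosSemidef ∧
        LinearMap.range S.mulVecLin ≤ LinearMap.range R.mulVecLin := by
  simp only [← conjTranspose_eq_transpose_of_trivial] at h3 ⊢
  exact posSemidef_fromBlocks_iff (isHermitian_iff_isSymm.2 hR) h1 h3

/-- Extended Schur lemma: the block matrix [[Q, Sᵀ],[S, R]] is positive semidefinite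
iff R ⪰ 0, Q − Sᵀ R⁺ S ⪰ 0 and range S ⊆ range R.  The Moore–Penrose pseudoinverse
R⁺ is encoded by the four Penrose conditions (which determine it uniquely). -/
theorem stmt_0 {n m : ℕ} (Q : Matrix (Fin n) (Fin n) ℝ) (R : Matrix (Fin m) (Fin m) ℝ)
    (S : Matrix (Fin m) (Fin n) ℝ) (hQ : Q.IsSymm) (hR : R.IsSymm)
    (Rp : Matrix (Fin m) (Fin m) ℝ)
    (h1 : R * Rp * R = R) (h2 : Rp * R * Rp = Rp)
    (h3 : (R * Rp)ᵀ = R * Rp) (h4 : (Rp * R)ᵀ = Rp * R) :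
    (Matrix.fromBlocks Q Sᵀ S R).PosSemidef ↔
      R.PosSemidef ∧ (Q - Sᵀ * Rp * S).PosSemidef ∧
        LinearMap.range S.mulVecLin ≤ LinearMap.range R.mulVecLin :=
  stmt_0_general Q R S hR Rp h1 h3
end

section
/- Let U be a real Hilbert space, M₂ : U → U bounded self-adjoint positive semidefinite, M₁ : H → U bounded linear, x ∈ H, and for ε > 0 set f(ε) = ⟨(M₂ + εI)⁻¹M₁x, M₁x⟩. Then for each α ≥ 1, the limit of ε^α f(ε) as ε → 0⁺ exists (in ℝ). -/
/-!
Write `y = M₁ x` and `g ε = ε ⟪(M₂ + ε)⁻¹ y, y⟫`, so that `ε ^ α f ε = ε ^ (α - 1) g ε`.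
Positivity of `M₂` makes `g` nonnegative, and `g` is nondecreasing: with
`a = (M₂ + ε)⁻¹ (M₂ + δ)⁻¹ y` the resolvents commute, `(M₂ + ε)⁻¹ y = M₂ a + δ a` and
`(M₂ + δ)⁻¹ y = M₂ a + ε a`, whence `g ε - g δ = (ε - δ) ⟪M₂ a, (M₂ + δ)(M₂ + ε) a⟫` and the last
inner product is `≥ 0`. A monotone function bounded below has a limit at `0⁺`, and so does
`ε ^ (α - 1)` for `α ≥ 1`.
-/

open Filter Set Topology
open scoped RealInnerProductSpace

section Resolvent

variable {U : Type*} [NormedAddCommGroup U] [InnerProductSpace ℝ U] {M : U →L[ℝ] U}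

lemma inner_add_smul_self_nonneg (hM : ∀ u, 0 ≤ ⟪M u, u⟫) {ε : ℝ} (hε : 0 ≤ ε) (z : U) :
    0 ≤ ⟪z, M z + ε • z⟫ := by
  rw [inner_add_right, real_inner_smul_right, real_inner_comm]
  exact add_nonneg (hM z) (mul_nonneg hε real_inner_self_nonneg)

lemma inner_apply_add_smul_comp_nonneg (hM : ∀ u, 0 ≤ ⟪M u, u⟫) {δ ε : ℝ} (hδ : 0 ≤ δ)
    (hε : 0 ≤ ε) (a : U) : 0 ≤ ⟪M a, M (M a + ε • a) + δ • (M a + ε • a)⟫ := by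
  have hMMa : 0 ≤ ⟪M a, M (M a)⟫ := real_inner_comm (M a) _ ▸ hM (M a)
  have hMa : 0 ≤ ⟪M a, M a⟫ := real_inner_self_nonneg
  have ha : 0 ≤ ⟪M a, a⟫ := hM a
  simp only [map_add, map_smul, inner_add_right, real_inner_smul_right]
  positivity

variable (hM : ∀ u, 0 ≤ ⟪M u, u⟫) {N : ℝ → U →L[ℝ] U}
  (hN : ∀ ε : ℝ, 0 < ε → (∀ u, N ε (M u + ε • u) = u) ∧ ∀ u, M (N ε u) + ε • N ε u = u)
include hM hN

lemma inner_resolvent_self_nonneg {ε : ℝ} (hε : 0 < ε) (y : U) : 0 ≤ ⟪N ε y, y⟫ := by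
  have := inner_add_smul_self_nonneg hM hε.le (N ε y)
  rwa [(hN ε hε).2] at this

lemma monotoneOn_mul_inner_resolvent (y : U) :
    MonotoneOn (fun ε => ε * ⟪N ε y, y⟫) (Ioi 0) := by
  intro δ (hδ : 0 < δ) ε (hε : 0 < ε) hδε
  set a := N ε (N δ y)
  have hNδ : N δ y = M a + ε • a := ((hN ε hε).2 _).symm
  have hy : y = M (M a + ε • a) + δ • (M a + ε • a) := by rw [← hNδ, (hN δ hδ).2]
  have hNε : N ε y = M a + δ • a := by
    have hy' : y = M (M a + δ • a) + ε • (M a + δ • a) := by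
      rw [hy]; simp only [map_add, map_smul]; module
    rw [hy', (hN ε hε).1]
  have hdiff : ε * ⟪N ε y, y⟫ - δ * ⟪N δ y, y⟫ = (ε - δ) * ⟪M a, y⟫ := by
    rw [hNε, hNδ]; simp only [inner_add_left, real_inner_smul_left]; ring
  have hMa : 0 ≤ ⟪M a, y⟫ := hy ▸ inner_apply_add_smul_comp_nonneg hM hδ.le hε.le a
  nlinarith

end Resolvent

theorem stmt_9_general {H U : Type*} [NormedAddCommGroup H] [InnerProductSpace ℝ H]
    [NormedAddCommGroup U] [InnerProductSpace ℝ U]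
    (M₂ : U →L[ℝ] U)
    (hpos : ∀ u : U, 0 ≤ (inner ℝ (M₂ u) u : ℝ))
    (M₁ : H →L[ℝ] U) (x : H)
    (N : ℝ → (U →L[ℝ] U))
    (hN : ∀ ε : ℝ, 0 < ε →
      (∀ u : U, N ε (M₂ u + ε • u) = u) ∧ (∀ u : U, M₂ (N ε u) + ε • N ε u = u))
    (α : ℝ) (hα : 1 ≤ α) :
    ∃ L : ℝ, Filter.Tendsto (fun ε : ℝ => ε ^ α * (inner ℝ (N ε (M₁ x)) (M₁ x) : ℝ))
      (nhdsWithin 0 (Set.Ioi 0)) (nhds L) := by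
  set g : ℝ → ℝ := fun ε => ε * ⟪N ε (M₁ x), M₁ x⟫
  have hg_bdd : BddBelow (g '' Ioi 0) := by
    refine ⟨0, ?_⟩
    rintro _ ⟨ε, hε : 0 < ε, rfl⟩
    exact mul_nonneg hε.le (inner_resolvent_self_nonneg hpos hN hε _)
  have hg : Tendsto g (𝓝[>] 0) (𝓝 (sInf (g '' Ioi 0))) :=
    (monotoneOn_mul_inner_resolvent hpos hN _).tendsto_nhdsGT hg_bdd
  have hpow : Tendsto (fun ε : ℝ => ε ^ (α - 1)) (𝓝[>] 0) (𝓝 (0 ^ (α - 1))) :=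
    (Real.continuousAt_rpow_const 0 _ (Or.inr (by linarith))).tendsto.mono_left
      nhdsWithin_le_nhds
  refine ⟨_, (hpow.mul hg).congr' ?_⟩
  filter_upwards [self_mem_nhdsWithin] with ε (hε : 0 < ε)
  rw [← mul_assoc, ← Real.rpow_add_one hε.ne', sub_add_cancel]

/-- For α ≥ 1, ε^α ⟨(M₂+εI)⁻¹M₁x, M₁x⟩ converges as ε → 0⁺. -/
theorem stmt_9 {H U : Type*} [NormedAddCommGroup H] [InnerProductSpace ℝ H] [CompleteSpace H]
    [NormedAddCommGroup U] [InnerProductSpace ℝ U] [CompleteSpace U]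
    (M₂ : U →L[ℝ] U) (hM₂ : ∀ u v : U, (inner ℝ (M₂ u) v : ℝ) = (inner ℝ u (M₂ v) : ℝ))
    (hpos : ∀ u : U, 0 ≤ (inner ℝ (M₂ u) u : ℝ))
    (M₁ : H →L[ℝ] U) (x : H)
    (N : ℝ → (U →L[ℝ] U))
    (hN : ∀ ε : ℝ, 0 < ε →
      (∀ u : U, N ε (M₂ u + ε • u) = u) ∧ (∀ u : U, M₂ (N ε u) + ε • N ε u = u))
    (α : ℝ) (hα : 1 ≤ α) :
    ∃ L : ℝ, Filter.Tendsto (fun ε : ℝ => ε ^ α * (inner ℝ (N ε (M₁ x)) (M₁ x) : ℝ))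
      (nhdsWithin 0 (Set.Ioi 0)) (nhds L) :=
  stmt_9_general M₂ hpos M₁ x N hN α hα
end

section
/- For the deterministic control system X'(s) = u(s) on [0,1] with X(0) = x and cost J(u) = X(1)² + ∫₀¹ s² u(s)² ds, the infimum of J over u ∈ L²(0,1;ℝ) equals 0 for every x ∈ ℝ. -/
/-!
The control `u = -x / (L s)` on `(e^{-L}, 1]` (and `0` on `(0, e^{-L}]`) steers the state exactly
to `X(1) = 0`, because `∫_{e^{-L}}^1 ds / s = L`, while its running cost is
`∫ s² u² = (1 - e^{-L}) x² / L² ≤ x² / L²`, which tends to `0` as `L → ∞`: the weight `s²`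
degenerates at `0`, so a control concentrated near `0` is cheap.
-/

open MeasureTheory Set Filter Topology

noncomputable section

def logControl (c δ : ℝ) : ℝ → ℝ :=
  (Ioc δ 1).indicator fun s => c * s⁻¹

variable {c δ : ℝ}

lemma measurable_logControl : Measurable (logControl c δ) :=
  (measurable_const.mul measurable_inv).indicator measurableSet_Ioc

lemma abs_logControl_le (hδ : 0 < δ) (s : ℝ) : |logControl c δ s| ≤ |c| * δ⁻¹ := by
  by_cases hs : s ∈ Ioc δ 1
  · have hs0 : 0 < s := hδ.trans hs.1
    rw [logControl, indicator_of_mem hs, abs_mul, abs_inv, abs_of_pos hs0]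
    gcongr
    exact hs.1.le
  · rw [logControl, indicator_of_notMem hs, abs_zero]
    positivity

lemma memLp_logControl {p : ENNReal} {μ : Measure ℝ} [IsFiniteMeasure μ] (hδ : 0 < δ) :
    MemLp (logControl c δ) p μ :=
  .of_bound measurable_logControl.aestronglyMeasurable _ (.of_forall (abs_logControl_le hδ))

lemma setIntegral_Ioc_indicator_Ioc {f : ℝ → ℝ} (hδ0 : 0 ≤ δ) (hδ1 : δ ≤ 1) :
    ∫ s in Ioc 0 1, (Ioc δ 1).indicator f s = ∫ s in δ..1, f s := by
  rw [setIntegral_indicator measurableSet_Ioc, inter_eq_right.2 (Ioc_subset_Ioc_left hδ0),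
    intervalIntegral.integral_of_le hδ1]

lemma setIntegral_Ioc_zero_one_logControl (hδ0 : 0 < δ) (hδ1 : δ ≤ 1) :
    ∫ s in Ioc 0 1, logControl c δ s = c * Real.log δ⁻¹ := by
  rw [logControl, setIntegral_Ioc_indicator_Ioc hδ0.le hδ1, intervalIntegral.integral_const_mul,
    integral_inv_of_pos hδ0 one_pos, one_div]

lemma setIntegral_Ioc_zero_one_sq_mul_logControl_sq (hδ0 : 0 < δ) (hδ1 : δ ≤ 1) :
    ∫ s in Ioc 0 1, s ^ 2 * logControl c δ s ^ 2 = (1 - δ) * c ^ 2 := by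
  have h : (fun s => s ^ 2 * logControl c δ s ^ 2) = (Ioc δ 1).indicator fun _ => c ^ 2 := by
    ext s
    by_cases hs : s ∈ Ioc δ 1
    · have hs0 : s ≠ 0 := (hδ0.trans hs.1).ne'
      simp only [logControl, indicator_of_mem hs]
      field_simp
    · simp [logControl, indicator_of_notMem hs]
  rw [h, setIntegral_Ioc_indicator_Ioc hδ0.le hδ1, intervalIntegral.integral_const, smul_eq_mul]

end

/-- The infimum of J(u) = (x + ∫₀¹ u)² + ∫₀¹ s²u(s)² ds over u ∈ L²(0,1) equals 0. -/
theorem stmt_14 (x : ℝ) :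
    IsGLB {y : ℝ | ∃ u : ℝ → ℝ, MemLp u 2 (volume.restrict (Set.Ioc (0:ℝ) 1)) ∧
        y = (x + ∫ r in Set.Ioc (0:ℝ) 1, u r) ^ 2
          + ∫ s in Set.Ioc (0:ℝ) 1, s ^ 2 * (u s) ^ 2} 0 := by
  refine ⟨?_, fun b hb => ?_⟩
  · rintro y ⟨u, -, rfl⟩
    have : 0 ≤ ∫ s in Ioc (0:ℝ) 1, s ^ 2 * u s ^ 2 :=
      setIntegral_nonneg measurableSet_Ioc fun s _ => by positivity
    positivity
  by_contra! hb0
  obtain ⟨L, hLb, hL0⟩ : ∃ L, x ^ 2 / L ^ 2 < b ∧ 0 < L :=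
    (((tendsto_const_nhds.div_atTop (tendsto_pow_atTop two_ne_zero)).eventually
      (gt_mem_nhds hb0)).and (eventually_gt_atTop 0)).exists
  have hδ0 : 0 < Real.exp (-L) := Real.exp_pos _
  have hδ1 : Real.exp (-L) ≤ 1 := Real.exp_le_one_iff.2 (by linarith)
  have hcost := hb ⟨logControl (-x / L) (Real.exp (-L)), memLp_logControl hδ0, rfl⟩
  rw [setIntegral_Ioc_zero_one_logControl hδ0 hδ1,
    setIntegral_Ioc_zero_one_sq_mul_logControl_sq hδ0 hδ1, ← Real.exp_neg, neg_neg,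
    Real.log_exp, div_mul_cancel₀ _ hL0.ne', add_neg_cancel, div_pow, neg_sq] at hcost
  nlinarith [div_nonneg (sq_nonneg x) (sq_nonneg L)]
end

section
/- Let U be a real Hilbert space and J : U → ℝ a convex, continuous function. Suppose (εₖ) is a sequence of positive reals converging to 0 and (uₖ) a sequence in U such that J(u) + εₖ‖u‖² ≥ J(uₖ) + εₖ‖uₖ‖² for all u ∈ U and all k (i.e., uₖ minimizes the Tikhonov-regularized functional). If uₖ converges weakly to u*, then u* is a global minimizer of J on U. -/
/-!
The Tikhonov minimizers satisfy `J uₖ ≤ J v + εₖ ‖v‖²` for every `v`, and the right-hand side tends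
to `J v`. A convex lower semicontinuous function is weakly sequentially lower semicontinuous, because
its sublevel sets are closed and convex, hence cannot be escaped by a weak limit (Hahn–Banach).
So `J u* ≤ J v`.
-/

open Filter Topology

theorem Convex.mem_of_tendsto_dual {E ι : Type*} [AddCommGroup E] [Module ℝ E] [TopologicalSpace E]
    [IsTopologicalAddGroup E] [ContinuousSMul ℝ E] [LocallyConvexSpace ℝ E]
    {s : Set E} (hconv : Convex ℝ s) (hclosed : IsClosed s) {l : Filter ι} [l.NeBot]
    {u : ι → E} {x : E} (hu : ∀ f : StrongDual ℝ E, Tendsto (fun k => f (u k)) l (𝓝 (f x)))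
    (hmem : ∀ᶠ k in l, u k ∈ s) : x ∈ s := by
  by_contra hx
  obtain ⟨f, c, hfx, hfs⟩ := geometric_hahn_banach_point_closed hconv hclosed hx
  have hbelow : ∀ᶠ k in l, f (u k) < c := (hu f).eventually (gt_mem_nhds hfx)
  obtain ⟨k, hk_lt, hk_mem⟩ := (hbelow.and hmem).exists
  exact (hfs _ hk_mem).asymm hk_lt

theorem ConvexOn.le_of_tendsto_dual {E ι : Type*} [AddCommGroup E] [Module ℝ E]
    [TopologicalSpace E] [IsTopologicalAddGroup E] [ContinuousSMul ℝ E] [LocallyConvexSpace ℝ E]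
    {J : E → ℝ} (hconv : ConvexOn ℝ Set.univ J) (hlsc : LowerSemicontinuous J)
    {l : Filter ι} [l.NeBot] {u : ι → E} {x : E}
    (hu : ∀ f : StrongDual ℝ E, Tendsto (fun k => f (u k)) l (𝓝 (f x)))
    {b : ι → ℝ} {β : ℝ} (hb : Tendsto b l (𝓝 β)) (hle : ∀ᶠ k in l, J (u k) ≤ b k) :
    J x ≤ β := by
  by_contra! hlt
  obtain ⟨β', hβ, hβ'⟩ := exists_between hlt
  have hsub_conv : Convex ℝ {y | J y ≤ β'} := by simpa using hconv.convex_le β'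
  have hmem : ∀ᶠ k in l, u k ∈ {y | J y ≤ β'} := by
    filter_upwards [hle, hb.eventually (gt_mem_nhds hβ)] with k hk hbk
    exact hk.trans hbk.le
  exact hβ'.not_ge (hsub_conv.mem_of_tendsto_dual (hlsc.isClosed_preimage β') hu hmem)

theorem tendsto_dual_of_tendsto_inner {U ι : Type*} [NormedAddCommGroup U] [InnerProductSpace ℝ U]
    [CompleteSpace U] {l : Filter ι} {u : ι → U} {x : U}
    (hw : ∀ h : U, Tendsto (fun k => (inner ℝ h (u k) : ℝ)) l (𝓝 (inner ℝ h x : ℝ)))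
    (f : StrongDual ℝ U) : Tendsto (fun k => f (u k)) l (𝓝 (f x)) := by
  simpa only [InnerProductSpace.toDual_symm_apply] using hw ((InnerProductSpace.toDual ℝ U).symm f)

/-- Weak limits of minimizers of Tikhonov regularizations J + εₖ‖·‖² (εₖ → 0⁺) are
global minimizers of the convex continuous functional J. -/
theorem stmt_17 {U : Type*} [NormedAddCommGroup U] [InnerProductSpace ℝ U] [CompleteSpace U]
    (J : U → ℝ) (hconv : ConvexOn ℝ Set.univ J) (hcont : Continuous J)
    (ε : ℕ → ℝ) (hεpos : ∀ k, 0 < ε k) (hε0 : Filter.Tendsto ε Filter.atTop (nhds 0))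
    (u : ℕ → U)
    (hmin : ∀ k, ∀ v : U, J (u k) + ε k * ‖u k‖ ^ 2 ≤ J v + ε k * ‖v‖ ^ 2)
    (u₀ : U)
    (hw : ∀ h : U, Filter.Tendsto (fun k => (inner ℝ h (u k) : ℝ)) Filter.atTop
      (nhds (inner ℝ h u₀ : ℝ))) :
    ∀ v : U, J u₀ ≤ J v := by
  intro v
  have hbound : ∀ k, J (u k) ≤ J v + ε k * ‖v‖ ^ 2 := fun k =>
    (le_add_of_nonneg_right (mul_nonneg (hεpos k).le (sq_nonneg _))).trans (hmin k v)
  have hlim : Tendsto (fun k => J v + ε k * ‖v‖ ^ 2) atTop (𝓝 (J v)) := by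
    simpa using tendsto_const_nhds.add (hε0.mul_const (‖v‖ ^ 2))
  exact hconv.le_of_tendsto_dual hcont.lowerSemicontinuous (tendsto_dual_of_tendsto_inner hw) hlim
    (Eventually.of_forall hbound)
end
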